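/- arXiv:math/0602147 — 3 statements merged into one kernel-verified Lean document; each statement's English description precedes it below -/
import Mathlib

section
/- Let ρ > 0, M > 0 and t ∈ (0,1], and let W : ℝ^n → ℝ^n be a Hölder continuous vector field of exponent t, supported in the ball B_ρ of radius ρ about the origin, with sup norm plus Hölder-t seminorm at most M. Then there is a constant C > 0, depending only on n, ρ, t and M, such that for all μ₁, μ₂ ∈ ℂ^n, each of whose real and imaginary parts are orthogonal unit vectors in ℝ^n, one has sup_{x ∈ B_ρ} |N_{μ₁}^{-1}(−μ₁·W)(x) − N_{μ₂}^{-1}(−μ₂·W)(x)| ≤ C |μ₁ − μ₂|^t. -/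
open MeasureTheory Complex Real Set
open scoped BigOperators

noncomputable section

/-- `ℝ^n` with the Euclidean norm. -/
abbrev Euc (n : ℕ) : Type := EuclideanSpace ℝ (Fin n)

/-- The vector of real parts of `μ ∈ ℂⁿ`. -/
noncomputable def reV {n : ℕ} (μ : EuclideanSpace ℂ (Fin n)) : Euc n := WithLp.toLp 2 (fun j => (μ j).re)

/-- The vector of imaginary parts of `μ ∈ ℂⁿ`. -/
noncomputable def imV {n : ℕ} (μ : EuclideanSpace ℂ (Fin n)) : Euc n := WithLp.toLp 2 (fun j => (μ j).im)

/-- The Cauchy-transform inverse `N_μ⁻¹` of the transport operator `μ·∇`. -/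
noncomputable def Nmuinv {n : ℕ} (μ : EuclideanSpace ℂ (Fin n)) (f : Euc n → ℂ) : Euc n → ℂ :=
  fun x => (1 / (2 * (π : ℂ))) *
    ∫ y : ℝ × ℝ, f (x - y.1 • reV μ - y.2 • imV μ) / ((y.1 : ℂ) + (y.2 : ℂ) * Complex.I)

/-- `μ` has orthonormal real and imaginary parts. -/
def GoodMu {n : ℕ} (μ : EuclideanSpace ℂ (Fin n)) : Prop :=
  ‖reV μ‖ = 1 ∧ ‖imV μ‖ = 1 ∧ (inner ℝ (reV μ) (imV μ) : ℝ) = 0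

/-- The function `x ↦ μ · W(x) = Σ_j μ_j W_j(x)`. -/
noncomputable def muDotW {n : ℕ} (μ : EuclideanSpace ℂ (Fin n)) (W : Euc n → Euc n) :
    Euc n → ℂ :=
  fun x => ∑ j, μ j * ((W x j : ℝ) : ℂ)

/-- `W` is Hölder continuous of exponent `t`, with sup norm plus Hölder seminorm at most `M`. -/
def HolderBdd {n : ℕ} (t M : ℝ) (W : Euc n → Euc n) : Prop :=
  ∃ a b : ℝ, 0 ≤ a ∧ 0 ≤ b ∧ a + b ≤ M ∧ (∀ x, ‖W x‖ ≤ a) ∧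
    ∀ x y, ‖W x - W y‖ ≤ b * ‖x - y‖ ^ t

/-!
Put `p_μ(y) = x - y₁ Re μ - y₂ Im μ`, so that `N_μ⁻¹(-μ·W)(x)` is the integral of `-μ·W(p_μ(y))`
against the Cauchy kernel `1 / (y₁ + i y₂)` over `y ∈ ℝ²`. Since `Re μ, Im μ` are orthonormal
and `‖x‖ ≤ ρ`, the point `p_μ(y)` leaves `B_ρ` once `|y| > 2ρ`, so both integrands vanish there.
For `|y| ≤ 2ρ` the two numerators differ by at most
`|μ₁ - μ₂| ‖W‖_∞ + |μ₂| [W]_t (2|y| |μ₁ - μ₂|)^t`, which is `O(|μ₁ - μ₂|^t)` because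
`|μ₁ - μ₂| ≤ 4`. Finally `|y|⁻¹` (sup norm on `ℝ × ℝ`, which is at most `|y₁ + i y₂|`) is
integrable on the disc `|y| ≤ 2ρ`, the plane being two-dimensional.
-/

open Metric

lemma norm_le_norm_ofReal_add_ofReal_mul_I (y : ℝ × ℝ) : ‖y‖ ≤ ‖(y.1 : ℂ) + y.2 * I‖ := by
  rw [Prod.norm_def]
  exact max_le (by simpa using Complex.abs_re_le_norm ((y.1 : ℂ) + y.2 * I))
    (by simpa using Complex.abs_im_le_norm ((y.1 : ℂ) + y.2 * I))

lemma norm_div_ofReal_add_ofReal_mul_I_le (z : ℂ) (y : ℝ × ℝ) :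
    ‖z / ((y.1 : ℂ) + y.2 * I)‖ ≤ ‖z‖ * ‖y‖⁻¹ := by
  rcases eq_or_ne y 0 with rfl | hy
  · simp
  rw [norm_div, div_eq_mul_inv]
  gcongr
  exact norm_le_norm_ofReal_add_ofReal_mul_I y

lemma integrable_indicator_closedBall_mul_inv_norm (A R : ℝ) :
    Integrable ((closedBall (0 : ℝ × ℝ) R).indicator fun y => A * ‖y‖⁻¹) := by
  have hloc : LocallyIntegrable fun y : ℝ × ℝ => ‖y‖⁻¹ := by
    refine locallyIntegrable_of_norm_le_rpow (C := 1) (α := 1) (by simp) (by simp)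
      (ae_of_all _ fun y => ?_) (by fun_prop)
    simp [Real.rpow_neg_one]
  exact IntegrableOn.integrable_indicator
    ((hloc.integrableOn_isCompact (isCompact_closedBall 0 R)).const_mul A) measurableSet_closedBall

section CauchyKernel

variable {g : ℝ × ℝ → ℂ} {A R : ℝ}

lemma norm_div_ofReal_add_ofReal_mul_I_le_indicator (hA : ∀ y, ‖y‖ ≤ R → ‖g y‖ ≤ A)
    (hR : ∀ y, R < ‖y‖ → g y = 0) (y : ℝ × ℝ) :
    ‖g y / ((y.1 : ℂ) + y.2 * I)‖ ≤ (closedBall 0 R).indicator (fun y => A * ‖y‖⁻¹) y := by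
  by_cases hy : ‖y‖ ≤ R
  · rw [indicator_of_mem (mem_closedBall_zero_iff.mpr hy)]
    exact (norm_div_ofReal_add_ofReal_mul_I_le _ y).trans (by gcongr; exact hA y hy)
  · rw [indicator_of_notMem (by simpa using hy), hR y (not_le.mp hy)]
    simp

lemma integrable_div_ofReal_add_ofReal_mul_I (hg : AEStronglyMeasurable g)
    (hA : ∀ y, ‖y‖ ≤ R → ‖g y‖ ≤ A) (hR : ∀ y, R < ‖y‖ → g y = 0) :
    Integrable fun y : ℝ × ℝ => g y / ((y.1 : ℂ) + y.2 * I) :=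
  (integrable_indicator_closedBall_mul_inv_norm A R).mono' (hg.div₀ (by fun_prop))
    (ae_of_all _ (norm_div_ofReal_add_ofReal_mul_I_le_indicator hA hR))

lemma norm_integral_div_ofReal_add_ofReal_mul_I_le (hA : ∀ y, ‖y‖ ≤ R → ‖g y‖ ≤ A)
    (hR : ∀ y, R < ‖y‖ → g y = 0) :
    ‖∫ y : ℝ × ℝ, g y / ((y.1 : ℂ) + y.2 * I)‖ ≤ A * ∫ y in closedBall (0 : ℝ × ℝ) R, ‖y‖⁻¹ := by
  rw [← integral_const_mul, ← integral_indicator measurableSet_closedBall]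
  exact norm_integral_le_of_norm_le (integrable_indicator_closedBall_mul_inv_norm A R)
    (ae_of_all _ (norm_div_ofReal_add_ofReal_mul_I_le_indicator hA hR))

end CauchyKernel

lemma continuous_of_norm_sub_le_mul_rpow {E F : Type*} [SeminormedAddCommGroup E]
    [SeminormedAddCommGroup F] {f : E → F} {b t : ℝ} (ht : 0 < t)
    (hf : ∀ x y, ‖f x - f y‖ ≤ b * ‖x - y‖ ^ t) : Continuous f := by
  refine continuous_iff_continuousAt.2 fun x => tendsto_iff_norm_sub_tendsto_zero.2 ?_
  refine squeeze_zero (fun _ => norm_nonneg _) (fun z => hf z x) ?_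
  have hcont : Continuous fun z => b * ‖z - x‖ ^ t :=
    continuous_const.mul ((continuous_id.sub continuous_const).norm.rpow_const
      fun _ => Or.inr ht.le)
  simpa [Real.zero_rpow ht.ne'] using hcont.tendsto x

lemma le_rpow_one_sub_mul_rpow {δ D t : ℝ} (hδ : 0 ≤ δ) (hδD : δ ≤ D) (ht : t ≤ 1) :
    δ ≤ D ^ (1 - t) * δ ^ t := by
  calc δ = δ ^ (1 - t) * δ ^ t := by
        rw [← Real.rpow_add' hδ (by norm_num), sub_add_cancel, Real.rpow_one]
    _ ≤ D ^ (1 - t) * δ ^ t := by gcongr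

section ReImParts

variable {n : ℕ}

lemma norm_sum_mul_ofReal_le (μ : EuclideanSpace ℂ (Fin n)) (v : Euc n) :
    ‖∑ j, μ j * (v j : ℂ)‖ ≤ ‖μ‖ * ‖v‖ := by
  calc ‖∑ j, μ j * (v j : ℂ)‖ ≤ ∑ j, ‖μ j‖ * ‖v j‖ := by
        refine (norm_sum_le _ _).trans_eq ?_
        simp
    _ ≤ √(∑ j, ‖μ j‖ ^ 2) * √(∑ j, ‖v j‖ ^ 2) := Real.sum_mul_le_sqrt_mul_sqrt _ _ _
    _ = ‖μ‖ * ‖v‖ := by rw [EuclideanSpace.norm_eq, EuclideanSpace.norm_eq]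

lemma norm_muDotW_sub_muDotW_le (μ ν : EuclideanSpace ℂ (Fin n)) (W : Euc n → Euc n)
    (z w : Euc n) :
    ‖muDotW μ W z - muDotW ν W w‖ ≤ ‖μ - ν‖ * ‖W z‖ + ‖ν‖ * ‖W z - W w‖ := by
  have h : muDotW μ W z - muDotW ν W w =
      ∑ j, (μ - ν) j * (W z j : ℂ) + ∑ j, ν j * ((W z - W w) j : ℂ) := by
    simp only [muDotW, PiLp.sub_apply, ofReal_sub, ← Finset.sum_add_distrib,
      ← Finset.sum_sub_distrib]
    exact Finset.sum_congr rfl fun j _ => by ring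
  rw [h]
  exact (norm_add_le _ _).trans
    (add_le_add (norm_sum_mul_ofReal_le _ _) (norm_sum_mul_ofReal_le _ _))

lemma norm_sq_eq_norm_reV_sq_add_norm_imV_sq (μ : EuclideanSpace ℂ (Fin n)) :
    ‖μ‖ ^ 2 = ‖reV μ‖ ^ 2 + ‖imV μ‖ ^ 2 := by
  simp only [EuclideanSpace.norm_sq_eq, ← Finset.sum_add_distrib]
  refine Finset.sum_congr rfl fun j _ => ?_
  simp only [reV, imV, PiLp.toLp_apply, Real.norm_eq_abs, sq_abs, Complex.sq_norm,
    Complex.normSq_apply]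
  ring

lemma reV_sub (μ ν : EuclideanSpace ℂ (Fin n)) : reV (μ - ν) = reV μ - reV ν := by
  ext j; simp [reV]

lemma imV_sub (μ ν : EuclideanSpace ℂ (Fin n)) : imV (μ - ν) = imV μ - imV ν := by
  ext j; simp [imV]

lemma norm_reV_le (μ : EuclideanSpace ℂ (Fin n)) : ‖reV μ‖ ≤ ‖μ‖ := by
  have := norm_sq_eq_norm_reV_sq_add_norm_imV_sq μ
  exact (sq_le_sq₀ (norm_nonneg _) (norm_nonneg _)).1 (by nlinarith)

lemma norm_imV_le (μ : EuclideanSpace ℂ (Fin n)) : ‖imV μ‖ ≤ ‖μ‖ := by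
  have := norm_sq_eq_norm_reV_sq_add_norm_imV_sq μ
  exact (sq_le_sq₀ (norm_nonneg _) (norm_nonneg _)).1 (by nlinarith)

lemma norm_smul_reV_add_smul_imV_le (μ : EuclideanSpace ℂ (Fin n)) (y : ℝ × ℝ) :
    ‖y.1 • reV μ + y.2 • imV μ‖ ≤ 2 * ‖y‖ * ‖μ‖ := by
  calc ‖y.1 • reV μ + y.2 • imV μ‖ ≤ ‖y.1‖ * ‖reV μ‖ + ‖y.2‖ * ‖imV μ‖ :=
        (norm_add_le _ _).trans_eq (by rw [norm_smul, norm_smul])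
    _ ≤ ‖y‖ * ‖μ‖ + ‖y‖ * ‖μ‖ := by
        gcongr
        exacts [norm_fst_le y, norm_reV_le μ, norm_snd_le y, norm_imV_le μ]
    _ = 2 * ‖y‖ * ‖μ‖ := by ring

namespace GoodMu

variable {μ : EuclideanSpace ℂ (Fin n)}

lemma norm_le_two (hμ : GoodMu μ) : ‖μ‖ ≤ 2 := by
  have := norm_sq_eq_norm_reV_sq_add_norm_imV_sq μ
  rw [hμ.1, hμ.2.1] at this
  nlinarith [norm_nonneg μ]

lemma norm_smul_reV_add_smul_imV (hμ : GoodMu μ) (s u : ℝ) :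
    ‖s • reV μ + u • imV μ‖ = ‖(s : ℂ) + u * I‖ := by
  have h := norm_add_sq_real (s • reV μ) (u • imV μ)
  rw [real_inner_smul_left, real_inner_smul_right, hμ.2.2, norm_smul, norm_smul, hμ.1,
    hμ.2.1] at h
  rw [Complex.norm_add_mul_I, ← Real.sqrt_sq (norm_nonneg (s • reV μ + u • imV μ)), h]
  simp

end GoodMu

end ReImParts

section PlanePoint

variable {n : ℕ}

def planePoint (μ : EuclideanSpace ℂ (Fin n)) (x : Euc n) (y : ℝ × ℝ) : Euc n :=
  x - y.1 • reV μ - y.2 • imV μ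

lemma continuous_planePoint (μ : EuclideanSpace ℂ (Fin n)) (x : Euc n) :
    Continuous (planePoint μ x) := by
  unfold planePoint; fun_prop

lemma norm_planePoint_sub_planePoint_le (μ ν : EuclideanSpace ℂ (Fin n)) (x : Euc n)
    (y : ℝ × ℝ) : ‖planePoint μ x y - planePoint ν x y‖ ≤ 2 * ‖y‖ * ‖μ - ν‖ := by
  have h : planePoint μ x y - planePoint ν x y = y.1 • reV (ν - μ) + y.2 • imV (ν - μ) := by
    simp only [planePoint, reV_sub, imV_sub, smul_sub]; abel
  rw [h, norm_sub_rev μ ν]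
  exact norm_smul_reV_add_smul_imV_le _ y

lemma GoodMu.lt_norm_planePoint {μ : EuclideanSpace ℂ (Fin n)} (hμ : GoodMu μ) {x : Euc n}
    {y : ℝ × ℝ} {ρ : ℝ} (hx : ‖x‖ ≤ ρ) (hy : 2 * ρ < ‖y‖) : ρ < ‖planePoint μ x y‖ := by
  have hplane : ‖y‖ ≤ ‖y.1 • reV μ + y.2 • imV μ‖ := by
    rw [hμ.norm_smul_reV_add_smul_imV]; exact norm_le_norm_ofReal_add_ofReal_mul_I y
  have hsub : planePoint μ x y = x - (y.1 • reV μ + y.2 • imV μ) := sub_sub _ _ _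
  have := norm_sub_norm_le (y.1 • reV μ + y.2 • imV μ) x
  rw [hsub, norm_sub_rev]
  linarith

lemma Nmuinv_sub_Nmuinv {μ ν : EuclideanSpace ℂ (Fin n)} {f g : Euc n → ℂ} {x : Euc n}
    (hf : Integrable fun y : ℝ × ℝ => f (planePoint μ x y) / ((y.1 : ℂ) + y.2 * I))
    (hg : Integrable fun y : ℝ × ℝ => g (planePoint ν x y) / ((y.1 : ℂ) + y.2 * I)) :
    Nmuinv μ f x - Nmuinv ν g x = (1 / (2 * π)) *
      ∫ y : ℝ × ℝ, (f (planePoint μ x y) - g (planePoint ν x y)) / ((y.1 : ℂ) + y.2 * I) := by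
  simp_rw [sub_div]
  rw [integral_sub hf hg, mul_sub]
  rfl

end PlanePoint

section HolderField

variable {n : ℕ} {W : Euc n → Euc n}

lemma continuous_muDotW (μ : EuclideanSpace ℂ (Fin n)) (hW : Continuous W) :
    Continuous (muDotW μ W) := by
  unfold muDotW; fun_prop

lemma norm_muDotW_le (μ : EuclideanSpace ℂ (Fin n)) (W : Euc n → Euc n) (z : Euc n) :
    ‖muDotW μ W z‖ ≤ ‖μ‖ * ‖W z‖ :=
  norm_sum_mul_ofReal_le μ (W z)

lemma norm_muDotW_planePoint_sub_le {μ ν : EuclideanSpace ℂ (Fin n)} {a b t R : ℝ}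
    (hμ : GoodMu μ) (hν : GoodMu ν) (ha : ∀ z, ‖W z‖ ≤ a) (hb0 : 0 ≤ b)
    (hb : ∀ z w, ‖W z - W w‖ ≤ b * ‖z - w‖ ^ t) (ht0 : 0 ≤ t) (ht1 : t ≤ 1)
    (x : Euc n) {y : ℝ × ℝ} (hy : 2 * ‖y‖ ≤ R) :
    ‖muDotW μ W (planePoint μ x y) - muDotW ν W (planePoint ν x y)‖ ≤
      (4 ^ (1 - t) * a + 2 * R ^ t * b) * ‖μ - ν‖ ^ t := by
  set δ := ‖μ - ν‖
  have hδ : δ ≤ 4 := by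
    have := norm_sub_le μ ν
    linarith [hμ.norm_le_two, hν.norm_le_two]
  have hWz := ha (planePoint μ x y)
  have hR : 0 ≤ R := by linarith [norm_nonneg y]
  have hdist : ‖planePoint μ x y - planePoint ν x y‖ ^ t ≤ R ^ t * δ ^ t := by
    rw [← Real.mul_rpow (by positivity) (norm_nonneg _)]
    gcongr
    exact (norm_planePoint_sub_planePoint_le μ ν x y).trans (by gcongr)
  calc _ ≤ δ * ‖W (planePoint μ x y)‖ +
        ‖ν‖ * ‖W (planePoint μ x y) - W (planePoint ν x y)‖ := norm_muDotW_sub_muDotW_le _ _ _ _ _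
    _ ≤ (4 ^ (1 - t) * δ ^ t) * a + 2 * (b * (R ^ t * δ ^ t)) := by
        gcongr
        · exact le_rpow_one_sub_mul_rpow (norm_nonneg _) hδ ht1
        · exact hν.norm_le_two
        · exact (hb _ _).trans (by gcongr)
    _ = (4 ^ (1 - t) * a + 2 * R ^ t * b) * δ ^ t := by ring


variable {ρ a b t : ℝ} {x : Euc n}

lemma muDotW_planePoint_eq_zero {μ : EuclideanSpace ℂ (Fin n)} (hμ : GoodMu μ)
    (hW : ∀ z, ρ < ‖z‖ → W z = 0) (hx : ‖x‖ ≤ ρ) {y : ℝ × ℝ} (hy : 2 * ρ < ‖y‖) :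
    muDotW μ W (planePoint μ x y) = 0 := by
  simp [muDotW, hW _ (hμ.lt_norm_planePoint hx hy)]

lemma integrable_neg_muDotW_planePoint_div {μ : EuclideanSpace ℂ (Fin n)} (hμ : GoodMu μ)
    (hW : ∀ z, ρ < ‖z‖ → W z = 0) (hWc : Continuous W) (ha : ∀ z, ‖W z‖ ≤ a) (hx : ‖x‖ ≤ ρ) :
    Integrable fun y : ℝ × ℝ => -muDotW μ W (planePoint μ x y) / ((y.1 : ℂ) + y.2 * I) :=
  integrable_div_ofReal_add_ofReal_mul_I
    ((continuous_muDotW μ hWc).comp (continuous_planePoint μ x)).neg.aestronglyMeasurable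
    (fun _ _ => (norm_neg _).trans_le ((norm_muDotW_le μ W _).trans
      (mul_le_mul_of_nonneg_left (ha _) (norm_nonneg μ))))
    (fun y hy => by rw [muDotW_planePoint_eq_zero hμ hW hx hy, neg_zero])

lemma norm_Nmuinv_sub_Nmuinv_le {μ₁ μ₂ : EuclideanSpace ℂ (Fin n)} (hμ₁ : GoodMu μ₁)
    (hμ₂ : GoodMu μ₂) (hW : ∀ z, ρ < ‖z‖ → W z = 0) (ha : ∀ z, ‖W z‖ ≤ a) (hb0 : 0 ≤ b)
    (hb : ∀ z w, ‖W z - W w‖ ≤ b * ‖z - w‖ ^ t) (ht0 : 0 < t) (ht1 : t ≤ 1) (hx : ‖x‖ ≤ ρ) :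
    ‖Nmuinv μ₁ (fun y => -muDotW μ₁ W y) x - Nmuinv μ₂ (fun y => -muDotW μ₂ W y) x‖ ≤
      (4 ^ (1 - t) * a + 2 * (4 * ρ) ^ t * b) * ‖μ₁ - μ₂‖ ^ t *
        (∫ y in closedBall (0 : ℝ × ℝ) (2 * ρ), ‖y‖⁻¹) / (2 * π) := by
  have hWc : Continuous W := continuous_of_norm_sub_le_mul_rpow ht0 hb
  have hnear : ∀ y : ℝ × ℝ, ‖y‖ ≤ 2 * ρ → ‖-muDotW μ₁ W (planePoint μ₁ x y) -
      -muDotW μ₂ W (planePoint μ₂ x y)‖ ≤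
        (4 ^ (1 - t) * a + 2 * (4 * ρ) ^ t * b) * ‖μ₁ - μ₂‖ ^ t := fun y hy => by
    rw [neg_sub_neg, norm_sub_rev]
    exact norm_muDotW_planePoint_sub_le hμ₁ hμ₂ ha hb0 hb ht0.le ht1 x (by linarith)
  have hfar : ∀ y : ℝ × ℝ, 2 * ρ < ‖y‖ →
      -muDotW μ₁ W (planePoint μ₁ x y) - -muDotW μ₂ W (planePoint μ₂ x y) = 0 := fun y hy => by
    rw [muDotW_planePoint_eq_zero hμ₁ hW hx hy, muDotW_planePoint_eq_zero hμ₂ hW hx hy, sub_self]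
  have hnorm : ‖(1 / (2 * π) : ℂ)‖ = 1 / (2 * π) := by simp [abs_of_pos pi_pos]
  rw [Nmuinv_sub_Nmuinv (f := fun z => -muDotW μ₁ W z) (g := fun z => -muDotW μ₂ W z)
    (integrable_neg_muDotW_planePoint_div hμ₁ hW hWc ha hx)
    (integrable_neg_muDotW_planePoint_div hμ₂ hW hWc ha hx), norm_mul, hnorm, one_div_mul_eq_div]
  gcongr
  exact norm_integral_div_ofReal_add_ofReal_mul_I_le hnear hfar

end HolderField

theorem stmt2_general (n : ℕ) (ρ t M : ℝ) (hρ : 0 < ρ) (ht0 : 0 < t) (ht1 : t ≤ 1)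
    (hM : 0 < M) :
    ∃ C : ℝ, 0 < C ∧
      ∀ W : Euc n → Euc n,
        (∀ x, ρ < ‖x‖ → W x = 0) →
        HolderBdd t M W →
        ∀ μ₁ μ₂ : EuclideanSpace ℂ (Fin n), GoodMu μ₁ → GoodMu μ₂ →
          ∀ x : Euc n, ‖x‖ ≤ ρ →
            ‖Nmuinv μ₁ (fun y => -muDotW μ₁ W y) x - Nmuinv μ₂ (fun y => -muDotW μ₂ W y) x‖
              ≤ C * ‖μ₁ - μ₂‖ ^ t := by
  set K := 4 ^ (1 - t) * M + 2 * (4 * ρ) ^ t * M with hK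
  set J := ∫ y in closedBall (0 : ℝ × ℝ) (2 * ρ), ‖y‖⁻¹
  have hJ : 0 ≤ J := setIntegral_nonneg measurableSet_closedBall fun _ _ => by positivity
  refine ⟨K * J / (2 * π) + 1, by positivity, ?_⟩
  rintro W hW ⟨a, b, ha0, hb0, habM, ha, hb⟩ μ₁ μ₂ hμ₁ hμ₂ x hx
  calc _ ≤ (4 ^ (1 - t) * a + 2 * (4 * ρ) ^ t * b) * ‖μ₁ - μ₂‖ ^ t * J / (2 * π) :=
        norm_Nmuinv_sub_Nmuinv_le hμ₁ hμ₂ hW ha hb0 hb ht0 ht1 hx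
    _ ≤ K * ‖μ₁ - μ₂‖ ^ t * J / (2 * π) := by rw [hK]; gcongr <;> linarith
    _ = K * J / (2 * π) * ‖μ₁ - μ₂‖ ^ t := by ring
    _ ≤ (K * J / (2 * π) + 1) * ‖μ₁ - μ₂‖ ^ t := by gcongr; linarith

theorem stmt2 (n : ℕ) (hn : 1 ≤ n) (ρ t M : ℝ) (hρ : 0 < ρ) (ht0 : 0 < t) (ht1 : t ≤ 1)
    (hM : 0 < M) :
    ∃ C : ℝ, 0 < C ∧
      ∀ W : Euc n → Euc n,
        (∀ x, ρ < ‖x‖ → W x = 0) →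
        HolderBdd t M W →
        ∀ μ₁ μ₂ : EuclideanSpace ℂ (Fin n), GoodMu μ₁ → GoodMu μ₂ →
          ∀ x : Euc n, ‖x‖ ≤ ρ →
            ‖Nmuinv μ₁ (fun y => -muDotW μ₁ W y) x - Nmuinv μ₂ (fun y => -muDotW μ₂ W y) x‖
              ≤ C * ‖μ₁ - μ₂‖ ^ t :=
  stmt2_general n ρ t M hρ ht0 ht1 hM
end
end

section
/- Let ρ > 0, M > 0 and t ∈ (0,1], and let W : ℝ^n → ℝ^n be a Hölder continuous vector field of exponent t, supported in the ball B_ρ of radius ρ about the origin, with sup norm plus Hölder-t seminorm at most M. Let η_ε be the standard mollifier and W^♯ := η_ε * W (componentwise convolution). Then there is a constant C > 0 depending only on n and ρ such that for every ε ∈ (0,1] and every μ ∈ ℂ^n whose real and imaginary parts are orthogonal unit vectors in ℝ^n, sup_{x ∈ B_ρ} |exp(i N_μ^{-1}(−μ·W^♯)(x)) − exp(i N_μ^{-1}(−μ·W)(x))| ≤ C e^{2CM} M ε^t. -/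
open MeasureTheory Complex Real Set
open scoped BigOperators

noncomputable section

/-- The mollification `η_ε * W` of a vector field `W`, where `η_ε(x) = ε^{-n} η(x/ε)`. -/
noncomputable def mollify {n : ℕ} (η : Euc n → ℝ) (ε : ℝ) (W : Euc n → Euc n) :
    Euc n → Euc n :=
  fun x => ∫ y : Euc n, (ε ^ (-(n : ℝ)) * η (ε⁻¹ • y)) • W (x - y)

lemma exp_sub_exp_bound (z w : ℂ) :
    ‖Complex.exp z - Complex.exp w‖ ≤ ‖z - w‖ * Real.exp (‖w‖ + ‖z - w‖) := by
  set φ : ℝ → ℂ := fun t => Complex.exp (w + t • (z - w)) with hφ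
  have hderiv : ∀ t ∈ Set.Icc (0:ℝ) 1,
      HasDerivWithinAt φ (Complex.exp (w + t • (z - w)) * (z - w)) (Set.Icc (0:ℝ) 1) t := by
    intro t _
    have h1 : HasDerivAt (fun t : ℝ => w + t • (z - w)) (z - w) t := by
      simpa using ((hasDerivAt_id t).smul_const (z - w)).const_add w
    exact h1.cexp.hasDerivWithinAt
  have hbound : ∀ t ∈ Set.Ico (0:ℝ) 1,
      ‖Complex.exp (w + t • (z - w)) * (z - w)‖ ≤ Real.exp (‖w‖ + ‖z - w‖) * ‖z - w‖ := by
    intro t ht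
    rw [norm_mul]
    have h2 : ‖Complex.exp (w + t • (z - w))‖ ≤ Real.exp (‖w‖ + ‖z - w‖) := by
      rw [Complex.norm_exp]
      apply Real.exp_le_exp.2
      calc (w + t • (z - w)).re ≤ ‖w + t • (z - w)‖ := Complex.re_le_norm _
        _ ≤ ‖w‖ + ‖t • (z - w)‖ := norm_add_le _ _
        _ ≤ ‖w‖ + ‖z - w‖ := by
            rw [norm_smul, Real.norm_eq_abs, _root_.abs_of_nonneg ht.1]
            nlinarith [norm_nonneg (z - w), ht.2.le]
    exact mul_le_mul_of_nonneg_right h2 (norm_nonneg _)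
  have := norm_image_sub_le_of_norm_deriv_le_segment' hderiv hbound 1 (by constructor <;> norm_num)
  simpa [φ, mul_comm] using this

lemma continuous_of_holder {n : ℕ} {V : Euc n → Euc n} {b t : ℝ} (ht : 0 < t)
    (hV : ∀ x y, ‖V x - V y‖ ≤ b * ‖x - y‖ ^ t) : Continuous V := by
  rw [continuous_iff_continuousAt]
  intro x₀
  rw [ContinuousAt, tendsto_iff_dist_tendsto_zero]
  have h1 : Filter.Tendsto (fun x : Euc n => dist x x₀) (nhds x₀) (nhds 0) := by
    simpa using (continuous_id.dist (continuous_const : Continuous fun _ : Euc n => x₀)).tendsto x₀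
  have h0 : Filter.Tendsto (fun x => b * dist x x₀ ^ t) (nhds x₀) (nhds (b * (0:ℝ) ^ t)) :=
    (((Real.continuousAt_rpow_const 0 t (Or.inr ht.le)).tendsto).comp h1).const_mul b
  rw [Real.zero_rpow ht.ne', mul_zero] at h0
  refine squeeze_zero (fun x => dist_nonneg) (fun x => ?_) h0
  rw [dist_eq_norm, dist_eq_norm]
  exact hV x x₀

lemma muDotW_le {n : ℕ} (μ : EuclideanSpace ℂ (Fin n)) (hμ : GoodMu μ)
    (V : Euc n → Euc n) (x : Euc n) : ‖muDotW μ V x‖ ≤ Real.sqrt 2 * ‖V x‖ := by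
  obtain ⟨h1, h2, -⟩ := hμ
  have hsum : ∑ j, ‖μ j‖ ^ 2 = 2 := by
    have e1 : ∑ j, ‖reV μ j‖ ^ 2 = 1 := by
      have h := h1
      rw [EuclideanSpace.norm_eq, Real.sqrt_eq_one] at h
      exact h
    have e2 : ∑ j, ‖imV μ j‖ ^ 2 = 1 := by
      have h := h2
      rw [EuclideanSpace.norm_eq, Real.sqrt_eq_one] at h
      exact h
    have : ∀ j : Fin n, ‖μ j‖ ^ 2 = ‖reV μ j‖ ^ 2 + ‖imV μ j‖ ^ 2 := by
      intro j
      rw [Complex.sq_norm, Complex.normSq_apply]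
      simp only [reV, imV, PiLp.toLp_apply, Real.norm_eq_abs]
      rw [_root_.sq_abs, _root_.sq_abs]
      ring
    rw [Finset.sum_congr rfl fun j _ => this j, Finset.sum_add_distrib, e1, e2]
    norm_num
  have hVx : ∑ j, ‖V x j‖ ^ 2 = ‖V x‖ ^ 2 := by
    rw [EuclideanSpace.norm_eq, Real.sq_sqrt (Finset.sum_nonneg fun j _ => sq_nonneg _)]
  have step1 : ‖muDotW μ V x‖ ≤ ∑ j, ‖μ j‖ * ‖V x j‖ := by
    refine (norm_sum_le _ _).trans (le_of_eq ?_)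
    refine Finset.sum_congr rfl fun j _ => ?_
    rw [norm_mul, Complex.norm_real]
  have step2 : (∑ j, ‖μ j‖ * ‖V x j‖) ^ 2 ≤ 2 * ‖V x‖ ^ 2 := by
    calc (∑ j, ‖μ j‖ * ‖V x j‖) ^ 2 ≤ (∑ j, ‖μ j‖ ^ 2) * ∑ j, ‖V x j‖ ^ 2 :=
          Finset.sum_mul_sq_le_sq_mul_sq _ _ _
      _ = 2 * ‖V x‖ ^ 2 := by rw [hsum, hVx]
  have hnn : (0:ℝ) ≤ ∑ j, ‖μ j‖ * ‖V x j‖ :=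
    Finset.sum_nonneg fun j _ => mul_nonneg (norm_nonneg _) (norm_nonneg _)
  refine step1.trans ?_
  have := Real.sqrt_le_sqrt step2
  rw [Real.sqrt_sq hnn] at this
  refine this.trans (le_of_eq ?_)
  rw [Real.sqrt_mul (by norm_num), Real.sqrt_sq (norm_nonneg _)]

lemma muDotW_sub_le {n : ℕ} (μ : EuclideanSpace ℂ (Fin n)) (hμ : GoodMu μ)
    (V₁ V₂ : Euc n → Euc n) (x : Euc n) :
    ‖muDotW μ V₁ x - muDotW μ V₂ x‖ ≤ Real.sqrt 2 * ‖V₁ x - V₂ x‖ := by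
  have : muDotW μ V₁ x - muDotW μ V₂ x = muDotW μ (fun y => V₁ y - V₂ y) x := by
    simp only [muDotW, ← Finset.sum_sub_distrib]
    refine Finset.sum_congr rfl fun j _ => ?_
    rw [← mul_sub, ← Complex.ofReal_sub]
    congr 2
  rw [this]
  exact muDotW_le μ hμ _ x

lemma norm_smul_add_smul_ge {n : ℕ} {u v : Euc n} (hu : ‖u‖ = 1) (hv : ‖v‖ = 1)
    (huv : (inner ℝ u v : ℝ) = 0) (a b : ℝ) : max |a| |b| ≤ ‖a • u + b • v‖ := by
  have ha : |a| ≤ ‖a • u + b • v‖ := by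
    have h := abs_real_inner_le_norm (a • u + b • v) u
    rw [inner_add_left, real_inner_smul_left, real_inner_smul_left,
      real_inner_self_eq_norm_sq, hu, real_inner_comm, huv] at h
    simpa using h
  have hb : |b| ≤ ‖a • u + b • v‖ := by
    have h := abs_real_inner_le_norm (a • u + b • v) v
    rw [inner_add_left, real_inner_smul_left, real_inner_smul_left,
      real_inner_self_eq_norm_sq, hv, huv] at h
    simpa using h
  exact max_le ha hb

noncomputable def pPart (R : ℝ) : ℝ → ℝ := (Set.Ioc (0:ℝ) R).indicator (fun s => s ^ (-(1/2) : ℝ))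
noncomputable def hfun (R : ℝ) : ℝ → ℝ := fun s => pPart R s + pPart R (-s)
noncomputable def J2 (R : ℝ) : ℝ := ∫ y : ℝ × ℝ, hfun R y.1 * hfun R y.2

lemma pPart_integrable {R : ℝ} (hR : 0 < R) : Integrable (pPart R) := by
  have h1 : IntegrableOn (fun s : ℝ => s ^ (-(1/2):ℝ)) (Set.Ioc 0 R) := by
    rw [integrableOn_Ioc_iff_integrableOn_Ioo]
    exact (intervalIntegral.integrableOn_Ioo_rpow_iff hR).2 (by norm_num)
  exact h1.integrable_indicator measurableSet_Ioc

lemma hfun_integrable {R : ℝ} (hR : 0 < R) : Integrable (hfun R) :=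
  (pPart_integrable hR).add (pPart_integrable hR).comp_neg

lemma pPart_nonneg (R s : ℝ) : 0 ≤ pPart R s := by
  unfold pPart
  apply Set.indicator_nonneg
  intro y hy
  exact Real.rpow_nonneg hy.1.le _

lemma hfun_nonneg (R s : ℝ) : 0 ≤ hfun R s := add_nonneg (pPart_nonneg _ _) (pPart_nonneg _ _)

lemma hfun_eq {R s : ℝ} (hs : s ≠ 0) (hsR : |s| ≤ R) : hfun R s = |s| ^ (-(1/2) : ℝ) := by
  rcases hs.lt_or_gt with h | h
  · have h1 : pPart R s = 0 := by
      unfold pPart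
      rw [Set.indicator_of_notMem]
      exact fun hmem => absurd hmem.1 (not_lt.2 h.le)
    have h2 : pPart R (-s) = (-s) ^ (-(1/2) : ℝ) := by
      unfold pPart
      rw [Set.indicator_of_mem]
      exact ⟨neg_pos.2 h, by rwa [abs_of_neg h] at hsR⟩
    rw [hfun, h1, h2, zero_add, abs_of_neg h]
  · have h1 : pPart R s = s ^ (-(1/2) : ℝ) := by
      unfold pPart
      rw [Set.indicator_of_mem]
      exact ⟨h, by rwa [abs_of_pos h] at hsR⟩
    have h2 : pPart R (-s) = 0 := by
      unfold pPart
      rw [Set.indicator_of_notMem]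
      exact fun hmem => absurd hmem.1 (by simp [h.le])
    rw [hfun, h1, h2, add_zero, abs_of_pos h]

lemma J2_nonneg (R : ℝ) : 0 ≤ J2 R :=
  integral_nonneg fun y => mul_nonneg (hfun_nonneg _ _) (hfun_nonneg _ _)

lemma prodMajorant_integrable {R : ℝ} (hR : 0 < R) :
    Integrable (fun y : ℝ × ℝ => hfun R y.1 * hfun R y.2) := by
  rw [Measure.volume_eq_prod]
  exact (hfun_integrable hR).mul_prod (hfun_integrable hR)

lemma nullAxes : (volume : Measure (ℝ × ℝ)) {y : ℝ × ℝ | y.1 = 0 ∨ y.2 = 0} = 0 := by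
  have hsub : {y : ℝ × ℝ | y.1 = 0 ∨ y.2 = 0} ⊆
      (({0} : Set ℝ) ×ˢ (univ : Set ℝ)) ∪ ((univ : Set ℝ) ×ˢ ({0} : Set ℝ)) := by
    rintro ⟨y1, y2⟩ (h | h)
    · exact Or.inl ⟨h, trivial⟩
    · exact Or.inr ⟨trivial, h⟩
  refine le_antisymm ?_ zero_le
  refine (measure_mono hsub).trans ?_
  refine (measure_union_le _ _).trans ?_
  rw [Measure.volume_eq_prod, Measure.prod_prod, Measure.prod_prod]
  simp

lemma ae_offAxes : ∀ᵐ y : ℝ × ℝ, y.1 ≠ 0 ∧ y.2 ≠ 0 := by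
  rw [MeasureTheory.ae_iff]
  have hset : {y : ℝ × ℝ | ¬(y.1 ≠ 0 ∧ y.2 ≠ 0)} = {y : ℝ × ℝ | y.1 = 0 ∨ y.2 = 0} := by
    ext y
    simp only [mem_setOf_eq, not_and_or, not_not]
  rw [hset]
  exact nullAxes

lemma nmuinv_core {n : ℕ} (μ : EuclideanSpace ℂ (Fin n)) (hμ : GoodMu μ)
    (f : Euc n → ℂ) (hf : Continuous f) {B r : ℝ} (hr : 0 < r)
    (hB : ∀ z, ‖f z‖ ≤ B) (hsupp : ∀ z, r < ‖z‖ → f z = 0)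
    (x : Euc n) (hx : ‖x‖ ≤ r) :
    Integrable (fun y : ℝ × ℝ =>
        f (x - y.1 • reV μ - y.2 • imV μ) / ((y.1 : ℂ) + (y.2 : ℂ) * Complex.I))
      ∧ ‖Nmuinv μ f x‖ ≤ ((1 / (2 * π)) * J2 (2 * r)) * B := by
  obtain ⟨hu, hv, huv⟩ := hμ
  have hB0 : 0 ≤ B := le_trans (norm_nonneg _) (hB x)
  have h2r : (0:ℝ) < 2 * r := by linarith
  set F := fun y : ℝ × ℝ =>
    f (x - y.1 • reV μ - y.2 • imV μ) / ((y.1 : ℂ) + (y.2 : ℂ) * Complex.I) with hF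
  set G := fun y : ℝ × ℝ => B * (hfun (2 * r) y.1 * hfun (2 * r) y.2) with hG
  have hGint : Integrable G := (prodMajorant_integrable h2r).const_mul B
  have key : ∀ y : ℝ × ℝ, y.1 ≠ 0 → y.2 ≠ 0 → ‖F y‖ ≤ G y := by
    intro y hy1 hy2
    have harg : x - y.1 • reV μ - y.2 • imV μ = x - (y.1 • reV μ + y.2 • imV μ) :=
      sub_sub x _ _
    have hsn : max |y.1| |y.2| ≤ ‖y.1 • reV μ + y.2 • imV μ‖ :=
      norm_smul_add_smul_ge hu hv huv y.1 y.2
    by_cases hcase : |y.1| ≤ 2 * r ∧ |y.2| ≤ 2 * r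
    · have hdre : ((y.1 : ℂ) + (y.2 : ℂ) * Complex.I).re = y.1 := by simp
      have hdim : ((y.1 : ℂ) + (y.2 : ℂ) * Complex.I).im = y.2 := by simp
      have habs : ‖(y.1 : ℂ) + (y.2 : ℂ) * Complex.I‖ = Real.sqrt (y.1 * y.1 + y.2 * y.2) := by
        rw [Complex.norm_def, Complex.normSq_apply, hdre, hdim]
      have hge : Real.sqrt (|y.1| * |y.2|) ≤ ‖(y.1 : ℂ) + (y.2 : ℂ) * Complex.I‖ := by
        rw [habs]
        apply Real.sqrt_le_sqrt
        nlinarith [sq_nonneg (|y.1| - |y.2|), abs_mul_abs_self y.1, abs_mul_abs_self y.2,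
          abs_nonneg y.1, abs_nonneg y.2]
      have hpos : 0 < Real.sqrt (|y.1| * |y.2|) :=
        Real.sqrt_pos.2 (mul_pos (abs_pos.2 hy1) (abs_pos.2 hy2))
      have hstep : ‖F y‖ ≤ B / Real.sqrt (|y.1| * |y.2|) := by
        rw [hF, norm_div]
        exact div_le_div₀ hB0 (hB _) hpos hge
      refine hstep.trans (le_of_eq ?_)
      show B / Real.sqrt (|y.1| * |y.2|) = B * (hfun (2 * r) y.1 * hfun (2 * r) y.2)
      rw [hfun_eq hy1 hcase.1, hfun_eq hy2 hcase.2,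
        Real.sqrt_mul (abs_nonneg _), Real.rpow_neg (abs_nonneg _),
        Real.rpow_neg (abs_nonneg _), div_eq_mul_inv, mul_inv,
        ← Real.sqrt_eq_rpow, ← Real.sqrt_eq_rpow]
    · have hbig : 2 * r < max |y.1| |y.2| := by
        rcases not_and_or.1 hcase with h | h
        · exact lt_max_of_lt_left (lt_of_not_ge h)
        · exact lt_max_of_lt_right (lt_of_not_ge h)
      have hfar : r < ‖x - (y.1 • reV μ + y.2 • imV μ)‖ := by
        have h5 : ‖y.1 • reV μ + y.2 • imV μ‖ - ‖x‖ ≤ ‖y.1 • reV μ + y.2 • imV μ - x‖ :=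
          norm_sub_norm_le _ _
        rw [norm_sub_rev] at h5
        linarith [hbig.trans_le hsn]
      have hzero : f (x - y.1 • reV μ - y.2 • imV μ) = 0 := by
        rw [harg]; exact hsupp _ hfar
      rw [hF]
      simp only [hzero, zero_div, norm_zero]
      exact mul_nonneg hB0 (mul_nonneg (hfun_nonneg _ _) (hfun_nonneg _ _))
  have hnum : Continuous fun y : ℝ × ℝ => f (x - y.1 • reV μ - y.2 • imV μ) :=
    hf.comp ((continuous_const.sub (continuous_fst.smul continuous_const)).sub
      (continuous_snd.smul continuous_const))
  have hden : Continuous fun y : ℝ × ℝ => (y.1 : ℂ) + (y.2 : ℂ) * Complex.I :=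
    (Complex.continuous_ofReal.comp continuous_fst).add
      ((Complex.continuous_ofReal.comp continuous_snd).mul continuous_const)
  have haesm : AEStronglyMeasurable F (volume : Measure (ℝ × ℝ)) :=
    (hnum.measurable.div hden.measurable).aestronglyMeasurable
  have hFae : ∀ᵐ y : ℝ × ℝ, ‖F y‖ ≤ G y := ae_offAxes.mono fun y hy => key y hy.1 hy.2
  have hFint : Integrable F := hGint.mono' haesm hFae
  refine ⟨hFint, ?_⟩
  have hIle : ‖∫ y : ℝ × ℝ, F y‖ ≤ ∫ y : ℝ × ℝ, G y := norm_integral_le_of_norm_le hGint hFae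
  have hGval : ∫ y : ℝ × ℝ, G y = B * J2 (2 * r) := by
    show ∫ y : ℝ × ℝ, B * (hfun (2 * r) y.1 * hfun (2 * r) y.2) = B * J2 (2 * r)
    rw [MeasureTheory.integral_const_mul]
    rfl
  have hc : ‖(1 / (2 * (π : ℂ)))‖ = 1 / (2 * π) := by
    have h7 : (2 * (π : ℂ)) = ((2 * π : ℝ) : ℂ) := by push_cast; ring
    rw [norm_div, norm_one, h7, Complex.norm_real, Real.norm_eq_abs,
      _root_.abs_of_pos (by positivity)]
  calc ‖Nmuinv μ f x‖ = ‖(1 / (2 * (π : ℂ)))‖ * ‖∫ y : ℝ × ℝ, F y‖ := by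
        rw [Nmuinv, norm_mul]
    _ ≤ (1 / (2 * π)) * (B * J2 (2 * r)) := by
        rw [hc, ← hGval]
        exact mul_le_mul_of_nonneg_left hIle (by positivity)
    _ = ((1 / (2 * π)) * J2 (2 * r)) * B := by ring

section Moll

variable {n : ℕ} {η : Euc n → ℝ} {ε : ℝ} {W : Euc n → Euc n} {a b t ρ : ℝ}

lemma moll_all (hη : Continuous η) (hη0 : ∀ x, 0 ≤ η x) (hηs : ∀ x, 1 < ‖x‖ → η x = 0)
    (hη1 : (∫ x : Euc n, η x) = 1) (hε : 0 < ε) (hε1 : ε ≤ 1)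
    (hWcont : Continuous W) (hWa : ∀ x, ‖W x‖ ≤ a)
    (hWb : ∀ x y, ‖W x - W y‖ ≤ b * ‖x - y‖ ^ t) (hb : 0 ≤ b) (ht : 0 < t)
    (hWsupp : ∀ x, ρ < ‖x‖ → W x = 0) :
    (∀ x, ‖mollify η ε W x - W x‖ ≤ b * ε ^ t) ∧ (∀ x, ‖mollify η ε W x‖ ≤ a) ∧
      (∀ x, ρ + 1 < ‖x‖ → mollify η ε W x = 0) ∧
      (∀ x₁ x₂, ‖mollify η ε W x₁ - mollify η ε W x₂‖ ≤ b * ‖x₁ - x₂‖ ^ t) := by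
  set g : Euc n → ℝ := fun y => ε ^ (-(n : ℝ)) * η (ε⁻¹ • y) with hgdef
  have hg0 : ∀ y, 0 ≤ g y := fun y => mul_nonneg (Real.rpow_nonneg hε.le _) (hη0 _)
  have hgs : ∀ y : Euc n, ε < ‖y‖ → g y = 0 := by
    intro y hy
    have h1 : (1:ℝ) < ‖ε⁻¹ • y‖ := by
      rw [norm_smul, Real.norm_eq_abs, abs_of_pos (inv_pos.2 hε)]
      calc (1:ℝ) = ε⁻¹ * ε := (inv_mul_cancel₀ hε.ne').symm
        _ < ε⁻¹ * ‖y‖ := by exact mul_lt_mul_of_pos_left hy (inv_pos.2 hε)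
    rw [hgdef]
    simp [hηs _ h1]
  have hgc : Continuous g := continuous_const.mul (hη.comp (continuous_id.const_smul ε⁻¹))
  have hgcs : HasCompactSupport g := by
    refine HasCompactSupport.intro (isCompact_closedBall (0 : Euc n) ε) fun y hy => hgs y ?_
    simpa [Metric.mem_closedBall, dist_zero_right, not_le] using hy
  have hgint : Integrable g := hgc.integrable_of_hasCompactSupport hgcs
  have hgone : ∫ y : Euc n, g y = 1 := by
    rw [hgdef]
    rw [MeasureTheory.integral_const_mul]
    have hs := MeasureTheory.Measure.integral_comp_inv_smul_of_nonneg
      (volume : Measure (Euc n)) η hε.le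
    rw [hs, finrank_euclideanSpace_fin, hη1, smul_eq_mul, mul_one,
      Real.rpow_neg hε.le, Real.rpow_natCast]
    exact inv_mul_cancel₀ (pow_ne_zero n hε.ne')
  have hintW : ∀ x, Integrable (fun y => g y • W (x - y)) := by
    intro x
    refine Continuous.integrable_of_hasCompactSupport
      (hgc.smul (hWcont.comp (continuous_const.sub continuous_id))) ?_
    refine HasCompactSupport.intro (isCompact_closedBall (0 : Euc n) ε) fun y hy => ?_
    rw [hgs y (by simpa [Metric.mem_closedBall, dist_zero_right, not_le] using hy), zero_smul]
  have hbound2 : ∀ x, ‖mollify η ε W x‖ ≤ a := by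
    intro x
    have h1 : ‖∫ y : Euc n, g y • W (x - y)‖ ≤ ∫ y : Euc n, g y * a := by
      refine norm_integral_le_of_norm_le (hgint.mul_const a) (Filter.Eventually.of_forall ?_)
      intro y
      rw [norm_smul, Real.norm_eq_abs, _root_.abs_of_nonneg (hg0 y)]
      exact mul_le_mul_of_nonneg_left (hWa _) (hg0 y)
    calc ‖mollify η ε W x‖ ≤ ∫ y : Euc n, g y * a := h1
      _ = a := by rw [MeasureTheory.integral_mul_const, hgone, one_mul]
  have hbound1 : ∀ x, ‖mollify η ε W x - W x‖ ≤ b * ε ^ t := by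
    intro x
    have e2 : ∫ y : Euc n, g y • W x = W x := by
      rw [integral_smul_const, hgone, one_smul]
    have hsub : mollify η ε W x - W x = ∫ y : Euc n, g y • (W (x - y) - W x) := by
      calc mollify η ε W x - W x
          = (∫ y : Euc n, g y • W (x - y)) - ∫ y : Euc n, g y • W x := by rw [e2]; rfl
        _ = ∫ y : Euc n, (g y • W (x - y) - g y • W x) :=
            (MeasureTheory.integral_sub (hintW x) (hgint.smul_const _)).symm
        _ = ∫ y : Euc n, g y • (W (x - y) - W x) := by
            congr 1
            funext y
            rw [smul_sub]
    rw [hsub]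
    have h1 : ‖∫ y : Euc n, g y • (W (x - y) - W x)‖ ≤ ∫ y : Euc n, g y * (b * ε ^ t) := by
      refine norm_integral_le_of_norm_le (hgint.mul_const _) (Filter.Eventually.of_forall ?_)
      intro y
      rw [norm_smul, Real.norm_eq_abs, _root_.abs_of_nonneg (hg0 y)]
      rcases le_or_gt ‖y‖ ε with hyε | hyε
      · refine mul_le_mul_of_nonneg_left ?_ (hg0 y)
        refine (hWb (x - y) x).trans ?_
        have harg : x - y - x = -y := by abel
        rw [harg, norm_neg]
        exact mul_le_mul_of_nonneg_left (Real.rpow_le_rpow (norm_nonneg _) hyε ht.le) hb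
      · rw [hgs y hyε, zero_mul, zero_mul]
    refine h1.trans (le_of_eq ?_)
    rw [MeasureTheory.integral_mul_const, hgone, one_mul]
  have hbound3 : ∀ x, ρ + 1 < ‖x‖ → mollify η ε W x = 0 := by
    intro x hx
    have hzero : ∀ y : Euc n, g y • W (x - y) = 0 := by
      intro y
      rcases le_or_gt ‖y‖ ε with hyε | hyε
      · have : ρ < ‖x - y‖ := by
          have h5 : ‖x‖ - ‖y‖ ≤ ‖x - y‖ := norm_sub_norm_le x y
          linarith
        rw [hWsupp _ this, smul_zero]
      · rw [hgs y hyε, zero_smul]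
    show (∫ y : Euc n, g y • W (x - y)) = 0
    rw [show (fun y : Euc n => g y • W (x - y)) = fun _ => (0 : Euc n) from funext hzero,
      MeasureTheory.integral_zero]
  have hbound4 : ∀ x₁ x₂, ‖mollify η ε W x₁ - mollify η ε W x₂‖ ≤ b * ‖x₁ - x₂‖ ^ t := by
    intro x₁ x₂
    have hsub : mollify η ε W x₁ - mollify η ε W x₂
        = ∫ y : Euc n, g y • (W (x₁ - y) - W (x₂ - y)) := by
      calc mollify η ε W x₁ - mollify η ε W x₂
          = (∫ y : Euc n, g y • W (x₁ - y)) - ∫ y : Euc n, g y • W (x₂ - y) := rfl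
        _ = ∫ y : Euc n, (g y • W (x₁ - y) - g y • W (x₂ - y)) :=
            (MeasureTheory.integral_sub (hintW x₁) (hintW x₂)).symm
        _ = ∫ y : Euc n, g y • (W (x₁ - y) - W (x₂ - y)) := by
            congr 1
            funext y
            rw [smul_sub]
    rw [hsub]
    have h1 : ‖∫ y : Euc n, g y • (W (x₁ - y) - W (x₂ - y))‖
        ≤ ∫ y : Euc n, g y * (b * ‖x₁ - x₂‖ ^ t) := by
      refine norm_integral_le_of_norm_le (hgint.mul_const _) (Filter.Eventually.of_forall ?_)
      intro y
      rw [norm_smul, Real.norm_eq_abs, _root_.abs_of_nonneg (hg0 y)]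
      refine mul_le_mul_of_nonneg_left ?_ (hg0 y)
      refine (hWb (x₁ - y) (x₂ - y)).trans (le_of_eq ?_)
      congr 2
      abel
    refine h1.trans (le_of_eq ?_)
    rw [MeasureTheory.integral_mul_const, hgone, one_mul]
  exact ⟨hbound1, hbound2, hbound3, hbound4⟩

end Moll

lemma muDotW_continuous {n : ℕ} (μ : EuclideanSpace ℂ (Fin n)) {V : Euc n → Euc n}
    (hV : Continuous V) : Continuous (muDotW μ V) := by
  unfold muDotW
  apply continuous_finset_sum
  intro j _
  exact continuous_const.mul (Complex.continuous_ofReal.comp ((continuous_apply j).comp (by fun_prop : Continuous fun a => (V a).ofLp)))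

lemma muDotW_zero {n : ℕ} (μ : EuclideanSpace ℂ (Fin n)) {V : Euc n → Euc n} {x : Euc n}
    (hx : V x = 0) : muDotW μ V x = 0 := by
  unfold muDotW
  rw [hx]
  simp


theorem stmt4 (n : ℕ) (hn : 1 ≤ n) (ρ : ℝ) (hρ : 0 < ρ) :
    ∃ C : ℝ, 0 < C ∧
      ∀ (M t : ℝ), 0 < M → 0 < t → t ≤ 1 →
      ∀ W : Euc n → Euc n,
        (∀ x, ρ < ‖x‖ → W x = 0) →
        HolderBdd t M W →
      ∀ η : Euc n → ℝ,
        ContDiff ℝ (⊤ : ℕ∞) η → (∀ x, 0 ≤ η x) → (∀ x, 1 < ‖x‖ → η x = 0) →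
        (∫ x : Euc n, η x) = 1 →
      ∀ ε : ℝ, 0 < ε → ε ≤ 1 →
      ∀ μ : EuclideanSpace ℂ (Fin n), GoodMu μ →
        ∀ x : Euc n, ‖x‖ ≤ ρ →
          ‖Complex.exp (Complex.I * Nmuinv μ (fun y => -muDotW μ (mollify η ε W) y) x)
              - Complex.exp (Complex.I * Nmuinv μ (fun y => -muDotW μ W y) x)‖
            ≤ C * Real.exp (2 * C * M) * M * ε ^ t := by
  set K : ℝ := (1 / (2 * π)) * J2 (2 * (ρ + 1)) with hKdef
  have hK0 : 0 ≤ K := mul_nonneg (by positivity) (J2_nonneg _)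
  set C : ℝ := Real.sqrt 2 * K + 1 with hCdef
  have hC0 : (0:ℝ) < C := by positivity
  refine ⟨C, hC0, ?_⟩
  intro M t hM ht ht1 W hWsupp hHold η hηsm hη0 hηs hη1 ε hε hε1 μ hμ x hx
  obtain ⟨a, b, ha, hb, hab, hWa, hWb⟩ := hHold
  have hWcont : Continuous W := continuous_of_holder ht hWb
  obtain ⟨m1, m2, m3, m4⟩ :=
    moll_all hηsm.continuous hη0 hηs hη1 hε hε1 hWcont hWa hWb hb ht hWsupp
  have hr : (0:ℝ) < ρ + 1 := by linarith
  have hx' : ‖x‖ ≤ ρ + 1 := by linarith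
  set Wm := mollify η ε W with hWm
  have hWmcont : Continuous Wm := continuous_of_holder ht m4
  -- the three functions
  set f1 : Euc n → ℂ := fun y => -muDotW μ Wm y with hf1
  set f2 : Euc n → ℂ := fun y => -muDotW μ W y with hf2
  set fd : Euc n → ℂ := fun y => f1 y - f2 y with hfd
  have hf1cont : Continuous f1 := (muDotW_continuous μ hWmcont).neg
  have hf2cont : Continuous f2 := (muDotW_continuous μ hWcont).neg
  have hfdcont : Continuous fd := hf1cont.sub hf2cont
  have hf1B : ∀ z, ‖f1 z‖ ≤ Real.sqrt 2 * a := by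
    intro z
    rw [hf1]
    simp only [norm_neg]
    exact (muDotW_le μ hμ Wm z).trans
      (mul_le_mul_of_nonneg_left (m2 z) (Real.sqrt_nonneg 2))
  have hf2B : ∀ z, ‖f2 z‖ ≤ Real.sqrt 2 * a := by
    intro z
    rw [hf2]
    simp only [norm_neg]
    exact (muDotW_le μ hμ W z).trans
      (mul_le_mul_of_nonneg_left (hWa z) (Real.sqrt_nonneg 2))
  have hfdB : ∀ z, ‖fd z‖ ≤ Real.sqrt 2 * (b * ε ^ t) := by
    intro z
    show ‖f1 z - f2 z‖ ≤ Real.sqrt 2 * (b * ε ^ t)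
    have : f1 z - f2 z = -(muDotW μ Wm z - muDotW μ W z) := by rw [hf1, hf2]; ring
    rw [this, norm_neg]
    refine (muDotW_sub_le μ hμ Wm W z).trans ?_
    exact mul_le_mul_of_nonneg_left (m1 z) (Real.sqrt_nonneg 2)
  have hf1s : ∀ z, ρ + 1 < ‖z‖ → f1 z = 0 := by
    intro z hz
    rw [hf1]
    simp only [neg_eq_zero]
    exact muDotW_zero μ (m3 z hz)
  have hf2s : ∀ z, ρ + 1 < ‖z‖ → f2 z = 0 := by
    intro z hz
    rw [hf2]
    simp only [neg_eq_zero]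
    exact muDotW_zero μ (hWsupp z (by linarith))
  have hfds : ∀ z, ρ + 1 < ‖z‖ → fd z = 0 := by
    intro z hz
    rw [hfd]
    show f1 z - f2 z = 0
    rw [hf1s z hz, hf2s z hz, sub_zero]
  have core1 := nmuinv_core μ hμ f1 hf1cont hr hf1B hf1s x hx'
  have core2 := nmuinv_core μ hμ f2 hf2cont hr hf2B hf2s x hx'
  have cored := nmuinv_core μ hμ fd hfdcont hr hfdB hfds x hx'
  have hAdiff : Nmuinv μ f1 x - Nmuinv μ f2 x = Nmuinv μ fd x := by
    rw [Nmuinv, Nmuinv, Nmuinv, ← mul_sub, ← MeasureTheory.integral_sub core1.1 core2.1]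
    congr 1
    congr 1
    funext y
    rw [div_sub_div_same]
  have hA2 : ‖Nmuinv μ f2 x‖ ≤ K * (Real.sqrt 2 * a) := core2.2
  have hAd : ‖Nmuinv μ f1 x - Nmuinv μ f2 x‖ ≤ K * (Real.sqrt 2 * (b * ε ^ t)) := by
    rw [hAdiff]; exact cored.2
  have hεt0 : (0:ℝ) ≤ ε ^ t := Real.rpow_nonneg hε.le t
  have hεt1 : ε ^ t ≤ 1 := Real.rpow_le_one hε.le hε1 ht.le
  have hmain := exp_sub_exp_bound (Complex.I * Nmuinv μ f1 x) (Complex.I * Nmuinv μ f2 x)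
  have hnorm1 : ‖Complex.I * Nmuinv μ f1 x - Complex.I * Nmuinv μ f2 x‖
      = ‖Nmuinv μ f1 x - Nmuinv μ f2 x‖ := by
    rw [← mul_sub, norm_mul, Complex.norm_I, one_mul]
  have hnorm2 : ‖Complex.I * Nmuinv μ f2 x‖ = ‖Nmuinv μ f2 x‖ := by
    rw [norm_mul, Complex.norm_I, one_mul]
  rw [hnorm1, hnorm2] at hmain
  have hba : b ≤ M := by linarith
  have haM : a ≤ M := by linarith
  have hfac : ‖Nmuinv μ f1 x - Nmuinv μ f2 x‖ ≤ C * M * ε ^ t := by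
    refine hAd.trans ?_
    have h1 : K * (Real.sqrt 2 * (b * ε ^ t)) = (Real.sqrt 2 * K) * b * ε ^ t := by ring
    rw [h1]
    have h2 : Real.sqrt 2 * K ≤ C := by rw [hCdef]; linarith
    refine mul_le_mul_of_nonneg_right ?_ hεt0
    calc Real.sqrt 2 * K * b ≤ C * b :=
          mul_le_mul_of_nonneg_right h2 hb
      _ ≤ C * M := mul_le_mul_of_nonneg_left hba hC0.le
  have hexpo : ‖Nmuinv μ f2 x‖ + ‖Nmuinv μ f1 x - Nmuinv μ f2 x‖ ≤ 2 * C * M := by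
    have h3 : K * (Real.sqrt 2 * (b * ε ^ t)) ≤ K * (Real.sqrt 2 * b) := by
      have : b * ε ^ t ≤ b := by
        calc b * ε ^ t ≤ b * 1 := mul_le_mul_of_nonneg_left hεt1 hb
          _ = b := mul_one b
      exact mul_le_mul_of_nonneg_left
        (mul_le_mul_of_nonneg_left this (Real.sqrt_nonneg 2)) hK0
    have h4 : K * (Real.sqrt 2 * a) + K * (Real.sqrt 2 * b) = (Real.sqrt 2 * K) * (a + b) := by
      ring
    have h5 : (Real.sqrt 2 * K) * (a + b) ≤ C * M := by
      apply mul_le_mul (by rw [hCdef]; linarith) hab (by linarith) hC0.le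
    calc ‖Nmuinv μ f2 x‖ + ‖Nmuinv μ f1 x - Nmuinv μ f2 x‖
        ≤ K * (Real.sqrt 2 * a) + K * (Real.sqrt 2 * (b * ε ^ t)) := add_le_add hA2 hAd
      _ ≤ K * (Real.sqrt 2 * a) + K * (Real.sqrt 2 * b) := by linarith
      _ ≤ C * M := by rw [h4] at *; linarith
      _ ≤ 2 * C * M := by nlinarith
  refine hmain.trans ?_
  calc ‖Nmuinv μ f1 x - Nmuinv μ f2 x‖
        * Real.exp (‖Nmuinv μ f2 x‖ + ‖Nmuinv μ f1 x - Nmuinv μ f2 x‖)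
      ≤ (C * M * ε ^ t) * Real.exp (2 * C * M) := by
        refine mul_le_mul hfac (Real.exp_le_exp.2 hexpo) (Real.exp_pos _).le (by positivity)
    _ = C * Real.exp (2 * C * M) * M * ε ^ t := by ring
end
end

section
/- Let Ω be a bounded open subset of ℝ^n with smooth boundary and let Ω̃ be a bounded open set with closure(Ω) ⊂ Ω̃. Then there is a constant C > 0 depending only on Ω and Ω̃ such that: for every M > 0 and all vector fields W₁, W₂ : closure(Ω) → ℝ^n that are Lipschitz with sup_{closure(Ω)} |W_l| + Lip(W_l) ≤ M (l = 1,2) and satisfy W₁(x) = W₂(x) for all x ∈ ∂Ω, there exist Lipschitz vector fields W̃₁, W̃₂ : ℝ^n → ℝ^n, each with compact support contained in Ω̃, such that W̃_l = W_l on closure(Ω), sup_{ℝ^n} |W̃_l| + Lip(W̃_l) ≤ C M for l = 1,2, and W̃₁(x) = W̃₂(x) for all x ∈ Ω̃ \ Ω. -/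
open MeasureTheory Complex Real Set
open scoped BigOperators

noncomputable section

/-- `Ω` has `C^∞` boundary: near every boundary point, `Ω` is the sublevel set of a smooth
local defining function with non-vanishing gradient. -/
def HasSmoothBoundary {n : ℕ} (Ω : Set (Euc n)) : Prop :=
  ∀ x ∈ frontier Ω, ∃ (U : Set (Euc n)) (g : Euc n → ℝ),
    IsOpen U ∧ x ∈ U ∧ ContDiff ℝ (⊤ : ℕ∞) g ∧ (∀ y ∈ U, fderiv ℝ g y ≠ 0) ∧
    ∀ y ∈ U, (y ∈ Ω ↔ g y < 0)

/-- `W` is Lipschitz on `s`, with sup norm plus Lipschitz constant on `s` at most `M`. -/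
def LipBddOn {n : ℕ} (s : Set (Euc n)) (M : ℝ) (W : Euc n → Euc n) : Prop :=
  ∃ a b : ℝ, 0 ≤ a ∧ 0 ≤ b ∧ a + b ≤ M ∧ (∀ x ∈ s, ‖W x‖ ≤ a) ∧
    ∀ x ∈ s, ∀ y ∈ s, ‖W x - W y‖ ≤ b * ‖x - y‖

lemma coord_abs_le_norm {n : ℕ} (v : Euc n) (i : Fin n) : |v i| ≤ ‖v‖ := by
  rw [EuclideanSpace.norm_eq]
  have h1 : |v i| = Real.sqrt (‖v i‖ ^ 2) := by
    rw [Real.sqrt_sq_eq_abs, Real.norm_eq_abs, _root_.abs_abs]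
  rw [h1]
  apply Real.sqrt_le_sqrt
  exact Finset.single_le_sum (f := fun j => ‖v j‖ ^ 2) (fun j _ => by positivity)
    (Finset.mem_univ i)

lemma exists_lip_extension {n : ℕ} (K : Set (Euc n)) (b : ℝ) (hb : 0 ≤ b)
    (W : Euc n → Euc n) (hW : ∀ x ∈ K, ∀ y ∈ K, ‖W x - W y‖ ≤ b * ‖x - y‖) :
    ∃ E : Euc n → Euc n, (∀ x ∈ K, E x = W x) ∧
      ∀ x y, ‖E x - E y‖ ≤ (Real.sqrt n * b) * ‖x - y‖ := by
  have hlip : ∀ i : Fin n, LipschitzOnWith b.toNNReal (fun x => W x i) K := by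
    intro i
    rw [lipschitzOnWith_iff_dist_le_mul]
    intro x hx y hy
    have h1 : dist (W x i) (W y i) = |(W x - W y) i| := by
      simp [Real.dist_eq, PiLp.sub_apply]
    rw [h1, Real.coe_toNNReal _ hb, dist_eq_norm]
    exact (coord_abs_le_norm _ i).trans (hW x hx y hy)
  choose E hElip hEeq using fun i => (hlip i).extend_real
  refine ⟨fun x => (WithLp.equiv 2 _).symm (fun i => E i x), ?_, ?_⟩
  · intro x hx
    apply (WithLp.equiv 2 _).symm_apply_eq.mpr
    funext i
    exact ((hEeq i) hx).symm
  · intro x y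
    rw [EuclideanSpace.norm_eq]
    have hbd : ∀ i : Fin n, ‖((WithLp.equiv 2 _).symm (fun i => E i x) -
        (WithLp.equiv 2 _).symm (fun i => E i y) : Euc n) i‖ ^ 2 ≤ (b * ‖x - y‖) ^ 2 := by
      intro i
      have h1 : ((WithLp.equiv 2 _).symm (fun i => E i x) -
          (WithLp.equiv 2 _).symm (fun i => E i y) : Euc n) i = E i x - E i y := by
        simp [PiLp.sub_apply]
      rw [h1]
      have h2 := (hElip i).dist_le_mul x y
      rw [Real.dist_eq, Real.coe_toNNReal _ hb, dist_eq_norm] at h2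
      have h3 : ‖E i x - E i y‖ = |E i x - E i y| := rfl
      rw [h3]
      exact pow_le_pow_left₀ (abs_nonneg _) h2 2
    calc Real.sqrt (∑ i, ‖((WithLp.equiv 2 _).symm (fun i => E i x) -
          (WithLp.equiv 2 _).symm (fun i => E i y) : Euc n) i‖ ^ 2)
        ≤ Real.sqrt (n * (b * ‖x - y‖) ^ 2) := by
          apply Real.sqrt_le_sqrt
          calc (∑ i, ‖((WithLp.equiv 2 _).symm (fun i => E i x) -
              (WithLp.equiv 2 _).symm (fun i => E i y) : Euc n) i‖ ^ 2)
              ≤ ∑ _i : Fin n, (b * ‖x - y‖) ^ 2 := Finset.sum_le_sum fun i _ => hbd i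
            _ = n * (b * ‖x - y‖) ^ 2 := by simp [mul_comm]
      _ = Real.sqrt n * (b * ‖x - y‖) := by
          rw [Real.sqrt_mul (by positivity), Real.sqrt_sq (by positivity)]
      _ = (Real.sqrt n * b) * ‖x - y‖ := by ring

lemma exists_frontier_between {n : ℕ} {Ω : Set (Euc n)} (hΩ : IsOpen Ω) {x y : Euc n}
    (hx : x ∈ closure Ω) (hy : y ∉ closure Ω) :
    ∃ z, z ∈ closure Ω ∧ z ∉ Ω ∧ ‖x - z‖ + ‖z - y‖ = ‖x - y‖ := by
  set f : ℝ → Euc n := fun t => x + t • (y - x) with hf_def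
  have hf : Continuous f := by fun_prop
  set S : Set ℝ := Icc (0:ℝ) 1 ∩ f ⁻¹' closure Ω with hS_def
  have hf0 : f 0 = x := by simp [hf_def]
  have hf1 : f 1 = y := by simp [hf_def]
  have hS0 : (0:ℝ) ∈ S := ⟨⟨le_refl 0, zero_le_one⟩, by simpa [hf0] using hx⟩
  have hSbdd : BddAbove S := ⟨1, fun t ht => ht.1.2⟩
  have hSclosed : IsClosed S := isClosed_Icc.inter (isClosed_closure.preimage hf)
  set t₀ : ℝ := sSup S with ht₀_def
  have ht₀ : t₀ ∈ S := hSclosed.csSup_mem ⟨0, hS0⟩ hSbdd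
  have h01 : t₀ ∈ Icc (0:ℝ) 1 := ht₀.1
  have hzc : f t₀ ∈ closure Ω := ht₀.2
  have hnotΩ : f t₀ ∉ Ω := by
    intro hmem
    have ht₀lt : t₀ < 1 := by
      rcases lt_or_eq_of_le h01.2 with h | h
      · exact h
      · exfalso; apply hy; rw [← hf1, ← h]; exact hzc
    have hnhds : f ⁻¹' Ω ∈ nhds t₀ := hf.continuousAt.preimage_mem_nhds (hΩ.mem_nhds hmem)
    obtain ⟨δ, δpos, hδ⟩ := Metric.mem_nhds_iff.mp hnhds
    set t₁ : ℝ := min 1 (t₀ + δ/2) with ht₁_def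
    have ht₁gt : t₀ < t₁ := lt_min ht₀lt (by linarith)
    have ht₁ball : t₁ ∈ Metric.ball t₀ δ := by
      rw [Metric.mem_ball, Real.dist_eq, abs_of_pos (by linarith)]
      have := min_le_right 1 (t₀ + δ/2)
      linarith
    have ht₁S : t₁ ∈ S := by
      refine ⟨⟨by linarith [h01.1], min_le_left _ _⟩, ?_⟩
      exact subset_closure (hδ ht₁ball)
    exact absurd (le_csSup hSbdd ht₁S) (not_le.mpr ht₁gt)
  refine ⟨f t₀, hzc, hnotΩ, ?_⟩
  have h1 : x - f t₀ = (-t₀) • (y - x) := by simp [hf_def]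
  have h2 : f t₀ - y = (t₀ - 1) • (y - x) := by
    simp only [hf_def]
    module
  rw [h1, h2, norm_smul, norm_smul, Real.norm_eq_abs, Real.norm_eq_abs,
    abs_of_nonpos (by linarith [h01.1] : -t₀ ≤ 0), abs_of_nonpos (by linarith [h01.2]),
    norm_sub_rev x y]
  ring

set_option maxHeartbeats 1000000 in
theorem stmt16 (n : ℕ) (hn : 1 ≤ n) (Ω Ωt : Set (Euc n))
    (hΩopen : IsOpen Ω) (hΩbdd : Bornology.IsBounded Ω) (hΩsmooth : HasSmoothBoundary Ω)
    (hΩtopen : IsOpen Ωt) (hΩtbdd : Bornology.IsBounded Ωt) (hsub : closure Ω ⊆ Ωt) :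
    ∃ C : ℝ, 0 < C ∧
      ∀ M : ℝ, 0 < M →
      ∀ W₁ W₂ : Euc n → Euc n,
        LipBddOn (closure Ω) M W₁ → LipBddOn (closure Ω) M W₂ →
        (∀ x ∈ frontier Ω, W₁ x = W₂ x) →
        ∃ Wt₁ Wt₂ : Euc n → Euc n,
          (∀ x ∈ closure Ω, Wt₁ x = W₁ x) ∧ (∀ x ∈ closure Ω, Wt₂ x = W₂ x) ∧
          HasCompactSupport Wt₁ ∧ tsupport Wt₁ ⊆ Ωt ∧
          HasCompactSupport Wt₂ ∧ tsupport Wt₂ ⊆ Ωt ∧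
          LipBddOn Set.univ (C * M) Wt₁ ∧ LipBddOn Set.univ (C * M) Wt₂ ∧
          ∀ x ∈ Ωt \ Ω, Wt₁ x = Wt₂ x := by
  classical
  by_cases hne : (closure Ω).Nonempty
  swap
  · -- Ω is empty
    have hcl : closure Ω = ∅ := not_nonempty_iff_eq_empty.mp hne
    refine ⟨1, one_pos, ?_⟩
    intro M hM W₁ W₂ _ _ _
    have h0supp : tsupport (fun _ : Euc n => (0 : Euc n)) = ∅ := by
      simp [tsupport, Function.support]
    have hcs : HasCompactSupport (fun _ : Euc n => (0 : Euc n)) :=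
      HasCompactSupport.intro isCompact_empty (fun x _ => rfl)
    refine ⟨fun _ => 0, fun _ => 0, by simp [hcl], by simp [hcl], hcs,
      h0supp ▸ empty_subset _, hcs, h0supp ▸ empty_subset _, ?_, ?_, fun x _ => rfl⟩ <;>
    exact ⟨0, 0, le_refl 0, le_refl 0, by linarith, fun x _ => by simp, fun x _ y _ => by simp⟩
  -- main case
  have hKcpt : IsCompact (closure Ω) := hΩbdd.isCompact_closure
  obtain ⟨ε, εpos, hεsub⟩ := hKcpt.exists_cthickening_subset_open hΩtopen hsub
  obtain ⟨T, hT_def⟩ : ∃ T, T = Metric.cthickening ε (closure Ω) := ⟨_, rfl⟩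
  rw [← hT_def] at hεsub
  have hTcpt : IsCompact T := hT_def ▸ hKcpt.cthickening
  have hTclosed : IsClosed T := hT_def ▸ Metric.isClosed_cthickening
  have hKT : closure Ω ⊆ T := hT_def ▸ Metric.self_subset_cthickening _
  obtain ⟨x₀, hx₀⟩ := hne
  obtain ⟨R₀, hR₀⟩ := hTcpt.isBounded.subset_closedBall x₀
  obtain ⟨R, hR_def⟩ : ∃ R : ℝ, R = max R₀ 0 := ⟨_, rfl⟩
  have hR : T ⊆ Metric.closedBall x₀ R :=
    hR₀.trans (Metric.closedBall_subset_closedBall (hR_def ▸ le_max_left _ _))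
  have hRnn : (0:ℝ) ≤ R := hR_def ▸ le_max_right _ _
  obtain ⟨s, hs_def⟩ : ∃ s : ℝ, s = Real.sqrt n := ⟨_, rfl⟩
  have hs1 : 1 ≤ s := by
    have h1 : (1:ℝ) ≤ (n:ℝ) := by exact_mod_cast hn
    have h2 := Real.sqrt_le_sqrt h1
    rw [Real.sqrt_one] at h2
    rw [hs_def]; exact h2
  obtain ⟨A, hA_def⟩ : ∃ A : ℝ, A = 1 + s * R := ⟨_, rfl⟩
  have hA1 : 1 ≤ A := by rw [hA_def]; nlinarith
  obtain ⟨B, hB_def⟩ : ∃ B : ℝ, B = A / ε + s := ⟨_, rfl⟩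
  have hB1 : 1 ≤ B := by
    have h1 : 0 ≤ A / ε := div_nonneg (by linarith) εpos.le
    rw [hB_def]; linarith
  refine ⟨A + B, by linarith, ?_⟩
  intro M hM W₁ W₂ h₁ h₂ hfr
  obtain ⟨a₁, b₁, ha₁0, hb₁0, hab₁, hWa₁, hWb₁⟩ := h₁
  obtain ⟨a₂, b₂, ha₂0, hb₂0, hab₂, hWa₂, hWb₂⟩ := h₂
  have ha₁M : a₁ ≤ M := by linarith
  have hb₁M : b₁ ≤ M := by linarith
  have hb₂M : b₂ ≤ M := by linarith
  obtain ⟨E, hEeq, hElip'⟩ := exists_lip_extension (closure Ω) b₁ hb₁0 W₁ hWb₁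
  have hElip : ∀ x y, ‖E x - E y‖ ≤ (s * b₁) * ‖x - y‖ := by rw [hs_def]; exact hElip'
  -- the cutoff function
  obtain ⟨χ, hχ_def⟩ : ∃ χ : Euc n → ℝ,
      χ = fun x => max (1 - Metric.infDist x (closure Ω) / ε) 0 := ⟨_, rfl⟩
  have hχK : ∀ x ∈ closure Ω, χ x = 1 := by
    intro x hx
    rw [hχ_def]
    simp [Metric.infDist_zero_of_mem hx]
  have hχ0 : ∀ x ∉ T, χ x = 0 := by
    intro x hx
    rw [hT_def] at hx
    have hd : ε ≤ Metric.infDist x (closure Ω) := by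
      by_contra hlt
      push_neg at hlt
      exact hx (Metric.thickening_subset_cthickening ε _
        ((Metric.mem_thickening_iff_infDist_lt ⟨x₀, hx₀⟩).mpr hlt))
    have h1 : 1 ≤ Metric.infDist x (closure Ω) / ε := (one_le_div εpos).mpr hd
    rw [hχ_def]
    simp only
    rw [max_eq_right (by linarith)]
  have hχ01 : ∀ x, 0 ≤ χ x ∧ χ x ≤ 1 := by
    intro x
    have h1 : 0 ≤ Metric.infDist x (closure Ω) / ε :=
      div_nonneg Metric.infDist_nonneg εpos.le
    rw [hχ_def]
    exact ⟨le_max_right _ _, max_le (by linarith) zero_le_one⟩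
  have hχlip : ∀ x y, |χ x - χ y| ≤ ε⁻¹ * ‖x - y‖ := by
    intro x y
    have h1 : |χ x - χ y| ≤ |(1 - Metric.infDist x (closure Ω) / ε) -
        (1 - Metric.infDist y (closure Ω) / ε)| := by
      rw [hχ_def]; exact abs_max_sub_max_le_abs _ _ _
    have heq : (1 - Metric.infDist x (closure Ω) / ε) -
        (1 - Metric.infDist y (closure Ω) / ε)
        = (Metric.infDist y (closure Ω) - Metric.infDist x (closure Ω)) / ε := by
      field_simp
      ring
    have h3 : |Metric.infDist y (closure Ω) - Metric.infDist x (closure Ω)| ≤ ‖x - y‖ := by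
      rw [← dist_eq_norm, abs_sub_le_iff]
      constructor
      · rw [dist_comm]
        linarith [Metric.infDist_le_infDist_add_dist (x := y) (y := x) (s := closure Ω)]
      · linarith [Metric.infDist_le_infDist_add_dist (x := x) (y := y) (s := closure Ω)]
    calc |χ x - χ y| ≤ |(Metric.infDist y (closure Ω) - Metric.infDist x (closure Ω)) / ε| :=
          heq ▸ h1
      _ = |Metric.infDist y (closure Ω) - Metric.infDist x (closure Ω)| / ε := by
          rw [abs_div, _root_.abs_of_pos εpos]
      _ ≤ ‖x - y‖ / ε := by gcongr
      _ = ε⁻¹ * ‖x - y‖ := by ring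
  obtain ⟨Wt₁, hWt₁_def⟩ : ∃ Wt₁ : Euc n → Euc n, Wt₁ = fun x => χ x • E x := ⟨_, rfl⟩
  have hWt₁K : ∀ x ∈ closure Ω, Wt₁ x = W₁ x := by
    intro x hx
    rw [hWt₁_def]
    simp only
    rw [hχK x hx, one_smul, hEeq x hx]
  have hEbd : ∀ x ∈ T, ‖E x‖ ≤ A * M := by
    intro x hx
    have h1 : ‖E x‖ - ‖E x₀‖ ≤ ‖E x - E x₀‖ := norm_sub_norm_le _ _
    have h2 : ‖E x - E x₀‖ ≤ (s * b₁) * ‖x - x₀‖ := hElip x x₀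
    have h3 : ‖x - x₀‖ ≤ R := by
      have := hR hx
      rwa [Metric.mem_closedBall, dist_eq_norm] at this
    have h4 : ‖E x₀‖ ≤ a₁ := by rw [hEeq x₀ hx₀]; exact hWa₁ x₀ hx₀
    have h5 : b₁ * ‖x - x₀‖ ≤ M * R := by
      apply mul_le_mul hb₁M h3 (norm_nonneg _) hM.le
    have h6 : s * (b₁ * ‖x - x₀‖) ≤ s * (M * R) :=
      mul_le_mul_of_nonneg_left h5 (by linarith)
    have h7 : ‖E x‖ ≤ a₁ + s * (M * R) := by nlinarith
    have h8 : a₁ + s * (M * R) ≤ A * M := by rw [hA_def]; nlinarith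
    linarith
  have hAM0 : 0 ≤ A * M := by nlinarith
  have hBM0 : 0 ≤ B * M := by nlinarith
  have hWt₁bd : ∀ x, ‖Wt₁ x‖ ≤ A * M := by
    intro x
    rw [hWt₁_def]
    simp only
    by_cases hx : x ∈ T
    · rw [norm_smul, Real.norm_eq_abs]
      calc |χ x| * ‖E x‖ ≤ 1 * (A * M) := by
            apply mul_le_mul _ (hEbd x hx) (norm_nonneg _) zero_le_one
            rw [_root_.abs_of_nonneg (hχ01 x).1]; exact (hχ01 x).2
        _ = A * M := one_mul _
    · rw [hχ0 x hx, zero_smul, norm_zero]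
      exact hAM0
  have hWt₁lip : ∀ x y, ‖Wt₁ x - Wt₁ y‖ ≤ B * M * ‖x - y‖ := by
    have key : ∀ x y, x ∈ T → ‖Wt₁ x - Wt₁ y‖ ≤ B * M * ‖x - y‖ := by
      intro x y hx
      have hexp : Wt₁ x - Wt₁ y = (χ x - χ y) • E x + χ y • (E x - E y) := by
        rw [hWt₁_def]
        simp only [sub_smul, smul_sub]
        abel
      rw [hexp]
      have hstep1 : |χ x - χ y| * ‖E x‖ ≤ (ε⁻¹ * ‖x - y‖) * (A * M) := by
        apply mul_le_mul (hχlip x y) (hEbd x hx) (norm_nonneg _)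
        positivity
      have hstep2 : |χ y| * ‖E x - E y‖ ≤ 1 * ((s * b₁) * ‖x - y‖) := by
        apply mul_le_mul _ (hElip x y) (norm_nonneg _) zero_le_one
        rw [_root_.abs_of_nonneg (hχ01 y).1]; exact (hχ01 y).2
      have hstep3 : (s * b₁) * ‖x - y‖ ≤ (s * M) * ‖x - y‖ := by
        apply mul_le_mul_of_nonneg_right _ (norm_nonneg _)
        apply mul_le_mul_of_nonneg_left hb₁M (by linarith)
      have hstep4 : (ε⁻¹ * ‖x - y‖) * (A * M) = (A / ε * M) * ‖x - y‖ := by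
        field_simp
      have hstep5 : B * M * ‖x - y‖ = (A / ε * M) * ‖x - y‖ + (s * M) * ‖x - y‖ := by
        rw [hB_def]; ring
      calc ‖(χ x - χ y) • E x + χ y • (E x - E y)‖
          ≤ ‖(χ x - χ y) • E x‖ + ‖χ y • (E x - E y)‖ := norm_add_le _ _
        _ = |χ x - χ y| * ‖E x‖ + |χ y| * ‖E x - E y‖ := by
            rw [norm_smul, norm_smul, Real.norm_eq_abs, Real.norm_eq_abs]
        _ ≤ B * M * ‖x - y‖ := by rw [hstep5]; rw [hstep4] at hstep1; linarith
    intro x y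
    by_cases hx : x ∈ T
    · exact key x y hx
    by_cases hy : y ∈ T
    · rw [norm_sub_rev, norm_sub_rev x y]
      exact key y x hy
    · rw [hWt₁_def]
      simp only
      rw [hχ0 x hx, hχ0 y hy, zero_smul, zero_smul, sub_zero, norm_zero]
      exact mul_nonneg hBM0 (norm_nonneg _)
  have hWt₁supp : ∀ x ∉ T, Wt₁ x = 0 := by
    intro x hx
    rw [hWt₁_def]
    simp only
    rw [hχ0 x hx, zero_smul]
  have hcs₁ : HasCompactSupport Wt₁ := HasCompactSupport.intro hTcpt hWt₁supp
  have hts₁ : tsupport Wt₁ ⊆ Ωt :=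
    (closure_minimal (Function.support_subset_iff'.mpr hWt₁supp) hTclosed).trans hεsub
  obtain ⟨Wt₂, hWt₂_def⟩ : ∃ Wt₂ : Euc n → Euc n,
      Wt₂ = fun x => if x ∈ closure Ω then W₂ x else Wt₁ x := ⟨_, rfl⟩
  have hWt₂K : ∀ x ∈ closure Ω, Wt₂ x = W₂ x := by
    intro x hx; rw [hWt₂_def]; simp only [if_pos hx]
  have hWt₂nK : ∀ x, x ∉ closure Ω → Wt₂ x = Wt₁ x := by
    intro x hx; rw [hWt₂_def]; simp only [if_neg hx]
  have hWt₂supp : ∀ x ∉ T, Wt₂ x = 0 := by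
    intro x hx
    have hxK : x ∉ closure Ω := fun h => hx (hKT h)
    rw [hWt₂nK x hxK]
    exact hWt₁supp x hx
  have hcs₂ : HasCompactSupport Wt₂ := HasCompactSupport.intro hTcpt hWt₂supp
  have hts₂ : tsupport Wt₂ ⊆ Ωt :=
    (closure_minimal (Function.support_subset_iff'.mpr hWt₂supp) hTclosed).trans hεsub
  have hbdry : ∀ z, z ∈ closure Ω → z ∉ Ω → Wt₁ z = W₂ z := by
    intro z hzK hzΩ
    have hzfr : z ∈ frontier Ω := by
      rw [frontier, hΩopen.interior_eq]
      exact ⟨hzK, hzΩ⟩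
    rw [hWt₁K z hzK]
    exact hfr z hzfr
  have hMBM : M ≤ B * M := by nlinarith
  have hWt₂bd : ∀ x, ‖Wt₂ x‖ ≤ A * M := by
    intro x
    by_cases hx : x ∈ closure Ω
    · rw [hWt₂K x hx]
      have h1 : ‖W₂ x‖ ≤ a₂ := hWa₂ x hx
      have h2 : M ≤ A * M := by nlinarith
      linarith
    · rw [hWt₂nK x hx]; exact hWt₁bd x
  have hmixed : ∀ x ∈ closure Ω, ∀ y, y ∉ closure Ω →
      ‖Wt₂ x - Wt₂ y‖ ≤ B * M * ‖x - y‖ := by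
    intro x hx y hy
    obtain ⟨z, hzK, hzΩ, hzd⟩ := exists_frontier_between hΩopen hx hy
    have hz2 : Wt₁ z = W₂ z := hbdry z hzK hzΩ
    have hexp : Wt₂ x - Wt₂ y = (W₂ x - W₂ z) + (Wt₁ z - Wt₁ y) := by
      rw [hWt₂K x hx, hWt₂nK y hy, hz2]
      abel
    rw [hexp]
    calc ‖(W₂ x - W₂ z) + (Wt₁ z - Wt₁ y)‖
        ≤ ‖W₂ x - W₂ z‖ + ‖Wt₁ z - Wt₁ y‖ := norm_add_le _ _
      _ ≤ b₂ * ‖x - z‖ + B * M * ‖z - y‖ := add_le_add (hWb₂ x hx z hzK) (hWt₁lip z y)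
      _ ≤ B * M * ‖x - z‖ + B * M * ‖z - y‖ := by
          have : b₂ * ‖x - z‖ ≤ B * M * ‖x - z‖ :=
            mul_le_mul_of_nonneg_right (by linarith) (norm_nonneg _)
          linarith
      _ = B * M * (‖x - z‖ + ‖z - y‖) := by ring
      _ = B * M * ‖x - y‖ := by rw [hzd]
  have hWt₂lip : ∀ x y, ‖Wt₂ x - Wt₂ y‖ ≤ B * M * ‖x - y‖ := by
    intro x y
    by_cases hx : x ∈ closure Ω <;> by_cases hy : y ∈ closure Ω
    · rw [hWt₂K x hx, hWt₂K y hy]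
      calc ‖W₂ x - W₂ y‖ ≤ b₂ * ‖x - y‖ := hWb₂ x hx y hy
        _ ≤ B * M * ‖x - y‖ := mul_le_mul_of_nonneg_right (by linarith) (norm_nonneg _)
    · exact hmixed x hx y hy
    · rw [norm_sub_rev, norm_sub_rev x y]
      exact hmixed y hy x hx
    · rw [hWt₂nK x hx, hWt₂nK y hy]
      exact hWt₁lip x y
  refine ⟨Wt₁, Wt₂, hWt₁K, hWt₂K, hcs₁, hts₁, hcs₂, hts₂,
    ⟨A * M, B * M, hAM0, hBM0, le_of_eq (by ring),
      fun x _ => hWt₁bd x, fun x _ y _ => hWt₁lip x y⟩,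
    ⟨A * M, B * M, hAM0, hBM0, le_of_eq (by ring),
      fun x _ => hWt₂bd x, fun x _ y _ => hWt₂lip x y⟩, ?_⟩
  intro x hx
  by_cases hxK : x ∈ closure Ω
  · rw [hWt₂K x hxK, hbdry x hxK hx.2]
  · rw [hWt₂nK x hxK]
end
end
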